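/- Let X = {a,b}, and let h : X* → X* be the morphism with h(a) = a^s and h(b) = a^{γ_1} b a^{α_1} b a^{α_2} b ⋯ b a^{α_{p-1}} b a^{γ_2}, where s ≥ 1, p ≥ 2 and γ_1, γ_2, α_1, …, α_{p-1} ≥ 0. Let w = ω(h) and for i ≥ 1 let A_w(i) denote the number of a's in w between the i-th and (i+1)-th occurrences of b. Then for every i ∈ {1,…,p-1} and every n ≥ 0, A_w(i + p·n) = α_i. -/

import Mathlib

/-- Words over the binary alphabet: `false` is the letter `a`, `true` is the letter `b`. -/
abbrev Word := List Bool

/-- The morphism of the free monoid determined by the images `g` of the letters. -/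
def applyG (g : Bool → Word) (w : Word) : Word := w.flatMap g

/-- `a^n`. -/
def rep (n : ℕ) : Word := List.replicate n false

/-- `b a^{α 1} b a^{α 2} ⋯ b a^{α (p-1)} b`, a word with `p` occurrences of `b`. -/
def blockWord (p : ℕ) (α : ℕ → ℕ) : Word :=
  ((List.range (p - 1)).flatMap fun i => true :: rep (α (i + 1))) ++ [true]

/-- `w^k`. -/
def wordPow (w : Word) (k : ℕ) : Word := (List.replicate k w).flatten

/-- `u` and `v` are `a`-conjugates. -/
def AConj (u v : Word) : Prop :=
  ∃ p q r s : ℕ, ∃ w : Word,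
    u = rep p ++ w ++ rep q ∧ v = rep r ++ w ++ rep s ∧ p + q = r + s

/-- `w` is the infinite word `ω(g)`: for every `n`, the word obtained from `g^n(b)` by deleting
all occurrences of `a` preceding the first occurrence of `b` is a prefix of `w`. -/
def IsOmega (g : Bool → Word) (w : ℕ → Bool) : Prop :=
  ∀ n k : ℕ, ∀ hk : k < (((applyG g)^[n] [true]).dropWhile (fun x => !x)).length,
    (((applyG g)^[n] [true]).dropWhile (fun x => !x)).get ⟨k, hk⟩ = w k

/-- `Aw w i` (for `i ≥ 1`): the number of occurrences of `a` in `w` strictly between the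
`i`-th and `(i+1)`-th occurrences of `b` in `w`. -/
noncomputable def Aw (w : ℕ → Bool) (i : ℕ) : ℕ :=
  Nat.nth (fun n => w n = true) i - Nat.nth (fun n => w n = true) (i - 1) - 1

/-!
Encode a word beginning with `b` by its list of gaps: `b a^{d₀} b a^{d₁} ⋯ b a^{d_k}`.
Since `h(b a^d) a^{γ₁} = a^{γ₁} b a^{α₁} ⋯ b a^{α_{p-1}} b a^{γ₂ + s d + γ₁}`,
conjugation by `a^{γ₁}` turns `h` into the substitution on gap lists replacing each gap `d`
by the `p` gaps `α₁, …, α_{p-1}, γ₂ + s d + γ₁`. Hence `hⁿ(b)` equals, up to leading and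
trailing `a`'s, the word of the `n`-th iterate of `[0]` under this substitution, whose gaps
at positions `p m + i - 1` (`1 ≤ i ≤ p - 1`) are all `αᵢ`. These words are prefixes of `ω(h)`
up to trailing `a`'s, which do not move the `b`'s.
-/

namespace List

lemma getElem?_flatMap_of_length_eq {α β : Type*} {f : α → List β} {p : ℕ}
    (hf : ∀ a, (f a).length = p) (L : List α) (k : ℕ) {r : ℕ} (hr : r < p) :
    (L.flatMap f)[p * k + r]? = L[k]?.bind fun a => (f a)[r]? := by
  induction L generalizing k with
  | nil => simp
  | cons a L ih =>
    cases k with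
    | zero => simp [getElem?_append_left, hf, hr]
    | succ k =>
      rw [flatMap_cons, getElem?_append_right (by rw [hf]; nlinarith), hf,
        show p * (k + 1) + r - p = p * k + r by rw [Nat.mul_succ]; omega, ih]
      simp

lemma length_flatMap_of_length_eq {α β : Type*} {f : α → List β} {p : ℕ}
    (hf : ∀ a, (f a).length = p) (L : List α) : (L.flatMap f).length = p * L.length := by
  induction L with
  | nil => simp
  | cons a L ih => simp [hf, ih, Nat.mul_succ, add_comm]

end List

namespace GapWord

def gapWord (M : List ℕ) : Word := M.flatMap fun d => true :: rep d

@[simp] lemma gapWord_nil : gapWord [] = [] := rfl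

@[simp] lemma gapWord_cons (d : ℕ) (M : List ℕ) :
    gapWord (d :: M) = true :: (rep d ++ gapWord M) := rfl

@[simp] lemma gapWord_append (L M : List ℕ) : gapWord (L ++ M) = gapWord L ++ gapWord M :=
  List.flatMap_append

lemma rep_add (m n : ℕ) : rep (m + n) = rep m ++ rep n := List.replicate_add m n false

lemma gapWord_append_singleton_append_rep (L : List ℕ) (x y : ℕ) :
    gapWord (L ++ [x]) ++ rep y = gapWord (L ++ [x + y]) := by
  simp [rep_add]

lemma count_true_gapWord (M : List ℕ) : (gapWord M).count true = M.length := by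
  induction M with
  | nil => rfl
  | cons d M ih => simp [rep, List.count_replicate, ih, add_comm]

lemma gapWord_eq_take_append (M : List ℕ) {k : ℕ} (hk : k < M.length) :
    gapWord M = gapWord (M.take k) ++ true :: (rep M[k] ++ gapWord (M.drop (k + 1))) := by
  rw [← gapWord_cons, ← List.drop_eq_getElem_cons hk, ← gapWord_append, List.take_append_drop]

lemma dropWhile_rep_append (n : ℕ) (l : Word) :
    (rep n ++ l).dropWhile (fun x => !x) = l.dropWhile (fun x => !x) := by
  induction n with
  | zero => rfl
  | succ n ih => simp [rep, List.replicate_succ] at ih ⊢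

lemma dropWhile_gapWord {M : List ℕ} (hM : M ≠ []) :
    (gapWord M).dropWhile (fun x => !x) = gapWord M := by
  obtain ⟨d, M, rfl⟩ := List.exists_cons_of_ne_nil hM
  simp

lemma count_eq_count_take {w : ℕ → Bool} {l : Word} {q : ℕ}
    (hw : ∀ j < q, l[j]? = some (w j)) :
    Nat.count (fun n => w n = true) q = (l.take q).count true := by
  induction q with
  | zero => simp
  | succ q ih =>
    rw [Nat.count_succ, List.take_add_one, hw q q.lt_add_one, List.count_append,
      ih fun j hj => hw j (by omega)]
    simp [List.count_singleton]

lemma nth_eq_length_gapWord_take {w : ℕ → Bool} {M : List ℕ} {u : Word} {t : ℕ}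
    (hM : gapWord M = u ++ rep t) (hw : ∀ j (hj : j < u.length), u[j] = w j)
    {k : ℕ} (hk : k < M.length) :
    Nat.nth (fun n => w n = true) k = (gapWord (M.take k)).length := by
  set P := (gapWord (M.take k)).length
  have hP : (gapWord M)[P]? = some true := by
    simp [gapWord_eq_take_append M hk, P]
  have hPu : P < u.length := by
    by_contra! h
    rw [hM, List.getElem?_append_right h, rep, List.getElem?_replicate] at hP
    simp at hP
  have hagree : ∀ j ≤ P, (gapWord M)[j]? = some (w j) := fun j hj => by
    rw [hM, List.getElem?_append_left (by omega), List.getElem?_eq_getElem (by omega), hw]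
  have hwP : w P = true := Option.some.inj ((hagree P le_rfl).symm.trans hP)
  have hcount : Nat.count (fun n => w n = true) P = k := by
    rw [count_eq_count_take fun j hj => hagree j hj.le, gapWord_eq_take_append M hk,
      List.take_left, count_true_gapWord, List.length_take]
    omega
  simpa [hcount] using Nat.nth_count (p := fun n => w n = true) hwP

lemma Aw_add_one_eq_getElem {w : ℕ → Bool} {M : List ℕ} {u : Word} {t : ℕ}
    (hM : gapWord M = u ++ rep t) (hw : ∀ j (hj : j < u.length), u[j] = w j)
    {k : ℕ} (hk : k + 1 < M.length) : Aw w (k + 1) = M[k] := by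
  have hsucc : M.take (k + 1) = M.take k ++ [M[k]] := by
    rw [List.take_add_one, List.getElem?_eq_getElem (by omega)]; rfl
  rw [Aw, nth_eq_length_gapWord_take hM hw hk, Nat.add_sub_cancel,
    nth_eq_length_gapWord_take hM hw (by omega), hsucc, gapWord_append, List.length_append]
  simp [rep]

end GapWord

section Morphism

open GapWord

variable (s p γ₁ γ₂ : ℕ) (α : ℕ → ℕ)

def blockGaps : List ℕ := (List.range (p - 1)).map fun j => α (j + 1)

def imageGaps (d : ℕ) : List ℕ := blockGaps p α ++ [γ₂ + s * d + γ₁]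

def gapIter (n : ℕ) : List ℕ := (fun M => M.flatMap (imageGaps s p γ₁ γ₂ α))^[n] [0]

variable {s p γ₁ γ₂ α}

lemma blockWord_append_rep (x : ℕ) :
    blockWord p α ++ rep x = gapWord (blockGaps p α ++ [x]) := by
  simp [blockWord, blockGaps, gapWord, List.flatMap_map]

lemma length_imageGaps (hp : 1 ≤ p) (d : ℕ) : (imageGaps s p γ₁ γ₂ α d).length = p := by
  simp [imageGaps, blockGaps]
  omega

lemma length_gapIter (hp : 1 ≤ p) (n : ℕ) : (gapIter s p γ₁ γ₂ α n).length = p ^ n := by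
  induction n with
  | zero => rfl
  | succ n ih =>
    rw [gapIter, Function.iterate_succ_apply', ← gapIter,
      List.length_flatMap_of_length_eq (length_imageGaps hp), ih, pow_succ, mul_comm]

variable {h : Bool → Word}

lemma applyG_cons (g : Bool → Word) (x : Bool) (l : Word) :
    applyG g (x :: l) = g x ++ applyG g l := List.flatMap_cons

lemma applyG_append (g : Bool → Word) (l₁ l₂ : Word) :
    applyG g (l₁ ++ l₂) = applyG g l₁ ++ applyG g l₂ := List.flatMap_append

lemma applyG_rep (ha : h false = rep s) (n : ℕ) : applyG h (rep n) = rep (s * n) := by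
  simp [applyG, rep, ha, List.flatMap_replicate, mul_comm]

lemma applyG_gapWord_append_rep (ha : h false = rep s)
    (hb : h true = rep γ₁ ++ blockWord p α ++ rep γ₂) (M : List ℕ) :
    applyG h (gapWord M) ++ rep γ₁ =
      rep γ₁ ++ gapWord (M.flatMap (imageGaps s p γ₁ γ₂ α)) := by
  induction M with
  | nil => simp [applyG]
  | cons d M ih =>
    calc applyG h (gapWord (d :: M)) ++ rep γ₁
        = rep γ₁ ++ (blockWord p α ++ rep (γ₂ + s * d)) ++
            (applyG h (gapWord M) ++ rep γ₁) := by
          simp [applyG_append, applyG_cons, applyG_rep ha, hb, rep_add]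
      _ = rep γ₁ ++
            gapWord (imageGaps s p γ₁ γ₂ α d ++ M.flatMap (imageGaps s p γ₁ γ₂ α)) := by
          rw [ih, blockWord_append_rep, ← List.append_assoc, List.append_assoc _ _ (rep γ₁),
            gapWord_append_singleton_append_rep]
          simp [imageGaps]

lemma gapIter_succ (n : ℕ) :
    gapIter s p γ₁ γ₂ α (n + 1) = (gapIter s p γ₁ γ₂ α n).flatMap (imageGaps s p γ₁ γ₂ α) :=
  Function.iterate_succ_apply' _ _ _

lemma exists_iterate_append_rep (ha : h false = rep s)
    (hb : h true = rep γ₁ ++ blockWord p α ++ rep γ₂) (n : ℕ) :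
    ∃ t, (applyG h)^[n] [true] ++ rep t = rep t ++ gapWord (gapIter s p γ₁ γ₂ α n) := by
  induction n with
  | zero => exact ⟨0, rfl⟩
  | succ n ih =>
    obtain ⟨t, ht⟩ := ih
    refine ⟨s * t + γ₁, ?_⟩
    calc (applyG h)^[n + 1] [true] ++ rep (s * t + γ₁)
        = applyG h ((applyG h)^[n] [true] ++ rep t) ++ rep γ₁ := by
          rw [Function.iterate_succ_apply', applyG_append, applyG_rep ha, rep_add,
            List.append_assoc]
      _ = rep (s * t + γ₁) ++ gapWord (gapIter s p γ₁ γ₂ α (n + 1)) := by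
          rw [ht, applyG_append, applyG_rep ha, List.append_assoc,
            applyG_gapWord_append_rep ha hb, gapIter_succ, rep_add, List.append_assoc]

lemma exists_gapWord_gapIter_eq_dropWhile_append_rep (hp : 1 ≤ p) (ha : h false = rep s)
    (hb : h true = rep γ₁ ++ blockWord p α ++ rep γ₂) (n : ℕ) :
    ∃ t, gapWord (gapIter s p γ₁ γ₂ α n) =
      ((applyG h)^[n] [true]).dropWhile (fun x => !x) ++ rep t := by
  obtain ⟨t, ht⟩ := exists_iterate_append_rep ha hb n
  refine ⟨t, ?_⟩
  have hne : gapIter s p γ₁ γ₂ α n ≠ [] :=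
    List.ne_nil_of_length_pos (by rw [length_gapIter hp n]; positivity)
  have hdrop := congrArg (List.dropWhile (fun x => !x)) ht
  rw [dropWhile_rep_append, dropWhile_gapWord hne, List.dropWhile_append] at hdrop
  split_ifs at hdrop
  · obtain ⟨d, G, hG⟩ := List.exists_cons_of_ne_nil hne
    simp [rep, hG] at hdrop
  · exact hdrop.symm

end Morphism

open GapWord in
theorem stmt6_general (s : ℕ) (p : ℕ) (hp : 2 ≤ p) (γ₁ γ₂ : ℕ) (α : ℕ → ℕ)
    (h : Bool → Word)
    (ha : h false = rep s)
    (hb : h true = rep γ₁ ++ blockWord p α ++ rep γ₂)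
    (w : ℕ → Bool) (hw : IsOmega h w) :
    ∀ i n : ℕ, 1 ≤ i → i ≤ p - 1 → Aw w (i + p * n) = α i := by
  intro i n hi hip
  obtain ⟨k, rfl⟩ : ∃ k, i = k + 1 := ⟨i - 1, by omega⟩
  obtain ⟨t, ht⟩ := exists_gapWord_gapIter_eq_dropWhile_append_rep (by omega) ha hb (n + 1)
  have hpow : n < p ^ n := Nat.lt_pow_self hp
  have hn : n < (gapIter s p γ₁ γ₂ α n).length := by rwa [length_gapIter (by omega)]
  have hget : (gapIter s p γ₁ γ₂ α (n + 1))[p * n + k]? = some (α (k + 1)) := by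
    rw [gapIter_succ,
      List.getElem?_flatMap_of_length_eq (length_imageGaps (by omega)) _ _ (by omega),
      List.getElem?_eq_getElem hn]
    simp [imageGaps, blockGaps, List.getElem?_append_left, show k < p - 1 by omega]
  have hlt : p * n + k + 1 < (gapIter s p γ₁ γ₂ α (n + 1)).length := by
    rw [length_gapIter (by omega), pow_succ']
    have hk : k + 2 ≤ p := by omega
    nlinarith [Nat.mul_le_mul_left p hpow]
  rw [show k + 1 + p * n = p * n + k + 1 by ring, Aw_add_one_eq_getElem ht (hw (n + 1)) hlt]
  simpa [List.getElem?_eq_getElem (Nat.lt_of_succ_lt hlt)] using hget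

/-- for `w = ω(h)`, `A_w(i + p·n) = α_i` for `1 ≤ i ≤ p-1`, `n ≥ 0`. -/
theorem stmt6 (s : ℕ) (hs : 1 ≤ s) (p : ℕ) (hp : 2 ≤ p) (γ₁ γ₂ : ℕ) (α : ℕ → ℕ)
    (h : Bool → Word)
    (ha : h false = rep s)
    (hb : h true = rep γ₁ ++ blockWord p α ++ rep γ₂)
    (w : ℕ → Bool) (hw : IsOmega h w) :
    ∀ i n : ℕ, 1 ≤ i → i ≤ p - 1 → Aw w (i + p * n) = α i :=
  stmt6_general s p hp γ₁ γ₂ α h ha hb w hw
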